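/- arXiv:1206.5424 — 2 statements merged into one kernel-verified Lean document; each statement's English description precedes it below -/
import Mathlib

section
/- Let E be a Banach space and (P_σ) a family of operators with the following property for an operator T : E → E: suppose that for every δ > 0 it is NOT the case that for all ξ < ω₁ there exists f with support in (ξ, ω₁), ‖f‖ ≤ 1 and ‖Tf‖ ≥ δ. Then there exists ξ < ω₁ such that T = T P_ξ, where P_ξ is the natural restriction projection. Concretely for J_p(ω₁): if T : J_p(ω₁) → J_p(ω₁) is a bounded operator such that for every n ∈ ℕ there exists ξ_n < ω₁ with ‖Tf‖ < 1/n whenever supp f ⊆ (ξ_n, ω₁) and ‖f‖ ≤ 1, then with ξ = sup_n ξ_n < ω₁ we have T = T P_ξ. -/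
/-!
Since `P (ξ n) ∘ P ξ = P (ξ n)` for `ξ = sup_n ξ_n`, the vector `g = f - P ξ f` lies in the kernel
of every `P (ξ n)`. Rescaling to the unit sphere, the hypothesis gives `‖T g‖ ≤ ‖g‖ / (n + 1)` for
all `n`, hence `T g = 0`.
-/

open Ordinal Filter Topology

namespace ContinuousLinearMap

variable {𝕜 E : Type*} [NontriviallyNormedField 𝕜] [NormedAlgebra ℝ 𝕜]
  [SeminormedAddCommGroup E] [NormedSpace 𝕜 E]

theorem norm_apply_le_of_forall_unit_norm {F : Type*} [SeminormedAddCommGroup F]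
    [NormedSpace 𝕜 F] (T : E →L[𝕜] F) {K : Submodule 𝕜 E} {C : ℝ} (hC : 0 ≤ C)
    (hT : ∀ f ∈ K, ‖f‖ = 1 → ‖T f‖ ≤ C) {g : E} (hg : g ∈ K) : ‖T g‖ ≤ C * ‖g‖ :=
  (T.comp K.subtypeL).le_of_opNorm_le
    (opNorm_le_of_unit_norm hC fun f hf => hT f f.2 hf) ⟨g, hg⟩

theorem apply_eq_zero_of_forall_unit_norm_le {F : Type*} [NormedAddCommGroup F]
    [NormedSpace 𝕜 F] (T : E →L[𝕜] F) {K : ℕ → Submodule 𝕜 E}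
    (hT : ∀ n : ℕ, ∀ f ∈ K n, ‖f‖ = 1 → ‖T f‖ ≤ 1 / (n + 1)) {g : E} (hg : ∀ n, g ∈ K n) :
    T g = 0 := by
  have hbound (n : ℕ) : ‖T g‖ ≤ 1 / (n + 1) * ‖g‖ :=
    T.norm_apply_le_of_forall_unit_norm (by positivity) (hT n) (hg n)
  have hlim : Tendsto (fun n : ℕ => 1 / ((n : ℝ) + 1) * ‖g‖) atTop (𝓝 0) := by
    simpa using tendsto_one_div_add_atTop_nhds_zero_nat.mul_const ‖g‖
  exact norm_le_zero_iff.mp (ge_of_tendsto' hlim hbound)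

end ContinuousLinearMap

theorem stmt15_general {E : Type*} [NormedAddCommGroup E] [NormedSpace ℝ E]
    (P : Ordinal → E →L[ℝ] E)
    (hP : ∀ σ τ : Ordinal, σ ≤ τ → (P σ).comp (P τ) = P σ)
    (T : E →L[ℝ] E) (ξ : ℕ → Ordinal) (hξ : ∀ n, ξ n < ω₁)
    (h : ∀ n : ℕ, ∀ f : E, P (ξ n) f = 0 → ‖f‖ ≤ 1 → ‖T f‖ < 1 / (n + 1)) :
    iSup ξ < ω₁ ∧ T = T.comp (P (iSup ξ)) := by
  refine ⟨Ordinal.iSup_lt_omega_one hξ, ?_⟩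
  ext f
  have hker (n : ℕ) : f - P (iSup ξ) f ∈ LinearMap.ker (P (ξ n) : E →ₗ[ℝ] E) := by
    rw [LinearMap.mem_ker, ContinuousLinearMap.coe_coe, map_sub,
      ← ContinuousLinearMap.comp_apply, hP _ _ (Ordinal.le_iSup ξ n)]
    exact sub_self _
  have hT (n : ℕ) : ∀ g ∈ LinearMap.ker (P (ξ n) : E →ₗ[ℝ] E), ‖g‖ = 1 → ‖T g‖ ≤ 1 / (n + 1) :=
    fun g hg hg1 => (h n g hg hg1.le).le
  have hTf := T.apply_eq_zero_of_forall_unit_norm_le hT hker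
  rwa [map_sub, sub_eq_zero] at hTf

/-- Abstract form of the localisation lemma for `J_p(ω₁)`: `E` is a Banach space equipped
with a transfinite family of projections `P σ` (modelled on `P_σ f = f·1_{[0,σ]}`, so that
"`supp f ⊆ (σ, ω₁)`" reads "`P σ f = 0`"), compatible in the sense `P σ ∘ P τ = P σ` for
`σ ≤ τ`. If `T` is a bounded operator and for every `n` there is `ξ_n < ω₁` such that
`‖Tf‖ < 1/(n+1)` whenever `P (ξ_n) f = 0` and `‖f‖ ≤ 1`, then `ξ = sup_n ξ_n < ω₁` and
`T = T ∘ P ξ`. -/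
theorem stmt15 {E : Type*} [NormedAddCommGroup E] [NormedSpace ℝ E] [CompleteSpace E]
    (P : Ordinal → E →L[ℝ] E)
    (hP : ∀ σ τ : Ordinal, σ ≤ τ → (P σ).comp (P τ) = P σ)
    (T : E →L[ℝ] E) (ξ : ℕ → Ordinal) (hξ : ∀ n, ξ n < ω₁)
    (h : ∀ n : ℕ, ∀ f : E, P (ξ n) f = 0 → ‖f‖ ≤ 1 → ‖T f‖ < 1 / (n + 1)) :
    iSup ξ < ω₁ ∧ T = T.comp (P (iSup ξ)) :=
  stmt15_general P hP T ξ hξ h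
end

section
/- If K is a compact Hausdorff scattered space, then every Radon measure on K is atomic (countably supported); consequently C(K)* is isometrically isomorphic to ℓ₁(K) and has the Schur property (every weakly convergent sequence in C(K)* converges in norm). -/
/-!
Restricted to the complement of its (countably many) atoms, a finite regular measure `μ` becomes a
regular measure `ν` without atoms, and `ν` is carried by its closed support. If that support were
nonempty, scatteredness would give it an isolated point `x`, i.e. an open `U` with
`U ∩ supp ν = {x}`; then `0 < ν U ≤ ν {x} = 0`. So `ν = 0`, and `μ` is the sum of its atoms.
-/

open MeasureTheory Set

namespace MeasureTheory.Measure

variable {X : Type*} [MeasurableSpace X]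

lemma countable_setOf_measure_singleton_pos [MeasurableSingletonClass X] (μ : Measure X)
    [SFinite μ] : {x | 0 < μ {x}}.Countable :=
  countable_meas_pos_of_disjoint_iUnion measurableSet_singleton
    fun _ _ hxy ↦ disjoint_singleton.mpr hxy

lemma nullSingletonClass_restrict_compl_setOf_measure_singleton_pos [MeasurableSingletonClass X]
    (μ : Measure X) : NullSingletonClass (μ.restrict {x | 0 < μ {x}}ᶜ) := by
  refine ⟨fun x ↦ ?_⟩
  rw [restrict_apply (measurableSet_singleton x)]
  by_cases hx : 0 < μ {x}
  · rw [singleton_inter_eq_empty.mpr (not_not.mpr hx), measure_empty]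
  · exact measure_mono_null inter_subset_left (not_lt.mp hx |>.antisymm bot_le)

lemma measure_eq_tsum_indicator_of_measure_compl_eq_zero [MeasurableSingletonClass X]
    {μ : Measure X} {s : Set X} (hs : s.Countable) (hμs : μ sᶜ = 0) (A : Set X) :
    μ A = ∑' x : s, A.indicator (fun y ↦ μ {y}) x := by
  calc μ A = μ (⋃ x ∈ s, A ∩ {x}) := by
        rw [← inter_iUnion₂, biUnion_of_singleton, measure_inter_conull hμs]
    _ = ∑' x : s, μ (A ∩ {x.1}) :=
        measure_biUnion hs (fun x _ y _ hxy ↦ (disjoint_singleton.mpr hxy).mono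
          inter_subset_right inter_subset_right)
          fun x _ ↦ subsingleton_singleton.anti inter_subset_right |>.measurableSet
    _ = ∑' x : s, A.indicator (fun y ↦ μ {y}) x := tsum_congr fun x ↦ by
        by_cases hx : x.1 ∈ A <;> simp [hx]

variable [TopologicalSpace X]

lemma measure_singleton_pos_of_inter_support_eq_singleton {ν : Measure X}
    (hν : ν ν.supportᶜ = 0) {x : X} {U : Set X} (hU : IsOpen U) (hUx : U ∩ ν.support = {x}) :
    0 < ν {x} := by
  have hx : x ∈ U ∩ ν.support := hUx.symm ▸ rfl
  have hUsub : U ⊆ {x} ∪ ν.supportᶜ := fun y hy ↦ by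
    by_cases hys : y ∈ ν.support
    · exact Or.inl (hUx ▸ ⟨hy, hys⟩)
    · exact Or.inr hys
  calc 0 < ν U := (mem_support_iff_forall x).mp hx.2 U (hU.mem_nhds hx.1)
    _ ≤ ν {x} + ν ν.supportᶜ := (measure_mono hUsub).trans (measure_union_le _ _)
    _ = ν {x} := by rw [hν, add_zero]

lemma eq_zero_of_nullSingletonClass_of_scattered
    (hscat : ∀ C : Set X, C.Nonempty → IsClosed C → ∃ x ∈ C, ∃ U : Set X, IsOpen U ∧ U ∩ C = {x})
    (ν : Measure X) [ν.Regular] [NullSingletonClass ν] : ν = 0 := by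
  have hsupp : ν.support = ∅ := by
    by_contra hne
    obtain ⟨x, -, U, hU, hUx⟩ := hscat _ (nonempty_iff_ne_empty.mpr hne) isClosed_support
    exact (measure_singleton_pos_of_inter_support_eq_singleton
      measure_compl_support_of_regular hU hUx).ne' (measure_singleton x)
  simpa [hsupp] using measure_compl_support_of_regular (μ := ν)

end MeasureTheory.Measure

open Measure in
theorem stmt16_general {K : Type*} [TopologicalSpace K] [T2Space K]
    [MeasurableSpace K] [BorelSpace K]
    (hscat : ∀ C : Set K, C.Nonempty → IsClosed C →
      ∃ x ∈ C, ∃ U : Set K, IsOpen U ∧ U ∩ C = {x})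
    (μ : Measure K) [IsFiniteMeasure μ] [μ.Regular] :
    ∃ s : Set K, s.Countable ∧
      ∀ A : Set K, MeasurableSet A →
        μ A = ∑' x : s, Set.indicator A (fun y => μ {y}) (x : K) := by
  set s := {x | 0 < μ {x}}
  have hs : s.Countable := countable_setOf_measure_singleton_pos μ
  have := Regular.restrict_of_measure_ne_top (measure_ne_top μ sᶜ)
  have := nullSingletonClass_restrict_compl_setOf_measure_singleton_pos μ
  have hdiffuse : μ sᶜ = 0 :=
    restrict_eq_zero.mp (eq_zero_of_nullSingletonClass_of_scattered hscat _)
  exact ⟨s, hs, fun A _ ↦ measure_eq_tsum_indicator_of_measure_compl_eq_zero hs hdiffuse A⟩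

/-- Every finite regular Borel (Radon) measure on a compact scattered Hausdorff space is
purely atomic: there is a countable set `s` such that the measure of every Borel set `A` is
the sum of the masses of the points of `s` lying in `A`. -/
theorem stmt16 {K : Type*} [TopologicalSpace K] [CompactSpace K] [T2Space K]
    [MeasurableSpace K] [BorelSpace K]
    (hscat : ∀ C : Set K, C.Nonempty → IsClosed C →
      ∃ x ∈ C, ∃ U : Set K, IsOpen U ∧ U ∩ C = {x})
    (μ : Measure K) [IsFiniteMeasure μ] [μ.Regular] :
    ∃ s : Set K, s.Countable ∧
      ∀ A : Set K, MeasurableSet A →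
        μ A = ∑' x : s, Set.indicator A (fun y => μ {y}) (x : K) :=
  stmt16_general hscat μ
end
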